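/- Let f ∈ SD²_{d−1}(0+) with d ∈ (0,1) and g_δ(t,v) = [f(t+δ, t−δv) − f(t, t−δv)] / f(t+δ, t). Then for every h₀ ∈ (0,1]: lim_{δ↓0} sup_{h₀ ≤ t ≤ 1} ∫_{h₀/δ}^{t/δ} |g_δ(t,v)| dv = 0. -/

import Mathlib

open MeasureTheory ProbabilityTheory Filter Set intervalIntegral Real

/-- `p01 F t r = ∂F/∂r (t,r)` -/
noncomputable def p01 (F : ℝ → ℝ → ℝ) (t r : ℝ) : ℝ := deriv (fun x => F t x) r
/-- `p10 F t r = ∂F/∂t (t,r)` -/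
noncomputable def p10 (F : ℝ → ℝ → ℝ) (t r : ℝ) : ℝ := deriv (fun x => F x r) t
/-- `p11 F t r = ∂²F/∂t∂r (t,r)` -/
noncomputable def p11 (F : ℝ → ℝ → ℝ) (t r : ℝ) : ℝ := deriv (fun x => p01 F x r) t
/-- `p02 F t r = ∂²F/∂r² (t,r)` -/
noncomputable def p02 (F : ℝ → ℝ → ℝ) (t r : ℝ) : ℝ := deriv (fun x => p01 F t x) r

/-- `lim_{h↓0} sup_{t∈K} |G h t + c| = 0` for every compact `K ⊂ ℝ`. -/
def UnifDiagLimit (G : ℝ → ℝ → ℝ) (c : ℝ) : Prop :=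
  ∀ K : Set ℝ, IsCompact K → ∀ ε > 0, ∃ h₀ > 0, ∀ h : ℝ, 0 < h → h < h₀ →
    ∀ t ∈ K, |G h t + c| < ε

/-- `F ∈ SR²_ρ(0+)` : a function of smooth variation of index `ρ` at the diagonal. -/
def SmoothVar (F : ℝ → ℝ → ℝ) (ρ : ℝ) : Prop :=
  ContinuousOn (fun p : ℝ × ℝ => F p.1 p.2) {p : ℝ × ℝ | p.2 ≤ p.1} ∧
  ContDiffOn ℝ 2 (fun p : ℝ × ℝ => F p.1 p.2) {p : ℝ × ℝ | p.2 < p.1} ∧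
  (∀ t r : ℝ, r < t → 0 < F t r) ∧
  UnifDiagLimit (fun h t => h * p01 F t (t - h) / F t (t - h)) ρ ∧
  UnifDiagLimit (fun h t => h * p10 F (t + h) t / F (t + h) t) (-ρ) ∧
  UnifDiagLimit (fun h t => h ^ 2 * p11 F t (t - h) / F t (t - h)) (ρ * (ρ - 1)) ∧
  UnifDiagLimit (fun h t => h ^ 2 * p02 F t (t - h) / F t (t - h)) (-(ρ * (ρ - 1)))

open scoped NNReal Topology

/-!
The numerator of `g_δ` is `O(δ)` uniformly: `f = ∂F/∂r` is `C¹` off the diagonal, hence Lipschitz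
in `t` on the compact triangle `0 ≤ r, r + h₀ ≤ t ≤ 2`. The denominator is large: the
smooth-variation condition gives `δ |f(t+δ, t)| ≥ (d/2) F(t+δ, t)`, and for any `q ∈ (d, 1)` it
also makes `h ↦ F(t, t-h) / h^q` decreasing near `0`, so `F(t+δ, t) ≥ c δ^q`. As the interval of
integration has length at most `1/δ`, the integral is `O(δ^(1-q))`.
-/

lemma antitoneOn_div_rpow {ψ ψ' : ℝ → ℝ} {q a b : ℝ} (ha : 0 < a)
    (hψ : ∀ x ∈ Icc a b, HasDerivAt ψ (ψ' x) x)
    (hle : ∀ x ∈ Icc a b, x * ψ' x ≤ q * ψ x) :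
    AntitoneOn (fun x => ψ x / x ^ q) (Icc a b) := by
  have hderiv : ∀ x ∈ Icc a b, HasDerivAt (fun x => ψ x / x ^ q)
      ((ψ' x * x ^ q - ψ x * (q * x ^ (q - 1))) / (x ^ q) ^ 2) x := fun x hx =>
    (hψ x hx).div (hasDerivAt_rpow_const (Or.inl (ha.trans_le hx.1).ne'))
      (rpow_pos_of_pos (ha.trans_le hx.1) q).ne'
  refine antitoneOn_of_deriv_nonpos (convex_Icc a b)
    (fun x hx => (hderiv x hx).continuousAt.continuousWithinAt)
    (fun x hx => (hderiv x (interior_subset hx)).differentiableAt.differentiableWithinAt)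
    fun x hx => ?_
  have hx : x ∈ Icc a b := interior_subset hx
  have hx0 : 0 < x := ha.trans_le hx.1
  have hsplit : ψ' x * x ^ q - ψ x * (q * x ^ (q - 1)) = x ^ (q - 1) * (x * ψ' x - q * ψ x) := by
    rw [show x ^ q = x ^ (q - 1) * x by rw [← rpow_add_one hx0.ne']; norm_num]; ring
  rw [(hderiv x hx).deriv, hsplit]
  exact div_nonpos_of_nonpos_of_nonneg
    (mul_nonpos_of_nonneg_of_nonpos (rpow_pos_of_pos hx0 _).le (sub_nonpos.2 (hle x hx)))
    (sq_nonneg _)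

lemma intervalIntegral_abs_div_le {N : ℝ → ℝ} {C D a t δ : ℝ} (hδ : 0 < δ) (hat : a ≤ t)
    (hN : ∀ r, 0 ≤ r → r < t - a → |N r| ≤ C * δ) :
    ∫ v in (a / δ)..(t / δ), |N (t - δ * v) / D| ≤ (t - a) * C / |D| := by
  have hle : a / δ ≤ t / δ := div_le_div_of_nonneg_right hat hδ.le
  have hpoint : ∀ v ∈ uIoc (a / δ) (t / δ), ‖|N (t - δ * v) / D|‖ ≤ C * δ / |D| := by
    intro v hv
    rw [uIoc_of_le hle, mem_Ioc, div_lt_iff₀' hδ, le_div_iff₀' hδ] at hv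
    rw [Real.norm_eq_abs, abs_abs, abs_div]
    gcongr
    exact hN _ (by linarith) (by linarith)
  calc (∫ v in (a / δ)..(t / δ), |N (t - δ * v) / D|)
      ≤ ‖∫ v in (a / δ)..(t / δ), |N (t - δ * v) / D|‖ := le_abs_self _
    _ ≤ C * δ / |D| * |t / δ - a / δ| := norm_integral_le_of_norm_le_const hpoint
    _ = (t - a) * C / |D| := by
      rw [abs_of_nonneg (sub_nonneg.2 hle)]
      field_simp

section SmoothVariation

variable {F : ℝ → ℝ → ℝ}

lemma hasDerivAt_p01
    (hF : DifferentiableOn ℝ (fun p : ℝ × ℝ => F p.1 p.2) {p : ℝ × ℝ | p.2 < p.1})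
    {t r : ℝ} (h : r < t) : HasDerivAt (F t) (p01 F t r) r := by
  have hG : DifferentiableAt ℝ (fun p : ℝ × ℝ => F p.1 p.2) (t, r) :=
    hF.differentiableAt ((isOpen_lt continuous_snd continuous_fst).mem_nhds h)
  exact (hG.comp r ((differentiableAt_const t).prodMk differentiableAt_id)).hasDerivAt

lemma contDiffOn_p01
    (hF : ContDiffOn ℝ 2 (fun p : ℝ × ℝ => F p.1 p.2) {p : ℝ × ℝ | p.2 < p.1}) :
    ContDiffOn ℝ 1 (fun p : ℝ × ℝ => p01 F p.1 p.2) {p : ℝ × ℝ | p.2 < p.1} := by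
  have hU : IsOpen {p : ℝ × ℝ | p.2 < p.1} := isOpen_lt continuous_snd continuous_fst
  have hfderiv : ContDiffOn ℝ 1
      (fun p : ℝ × ℝ => fderiv ℝ (fun p : ℝ × ℝ => F p.1 p.2) p (0, 1)) {p | p.2 < p.1} :=
    (ContinuousLinearMap.apply ℝ ℝ ((0 : ℝ), (1 : ℝ))).contDiff.comp_contDiffOn
      (hF.fderiv_of_isOpen hU (by norm_num))
  refine hfderiv.congr fun p hp => ?_
  have hG := (hF.differentiableOn (by norm_num)).differentiableAt (hU.mem_nhds hp)
  exact (hG.hasFDerivAt.comp_hasDerivAt p.2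
    ((hasDerivAt_const p.2 p.1).prodMk (hasDerivAt_id p.2))).deriv

lemma exists_abs_p01_sub_le
    (hF : ContDiffOn ℝ 2 (fun p : ℝ × ℝ => F p.1 p.2) {p : ℝ × ℝ | p.2 < p.1})
    {a : ℝ} (ha : 0 < a) (b : ℝ) :
    ∃ C : ℝ≥0, ∀ s t r : ℝ, t ≤ s → s ≤ b → 0 ≤ r → r + a ≤ t →
      |p01 F s r - p01 F t r| ≤ C * (s - t) := by
  set K : Set (ℝ × ℝ) := {p | 0 ≤ p.2 ∧ p.2 + a ≤ p.1 ∧ p.1 ≤ b}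
  have hKU : K ⊆ {p : ℝ × ℝ | p.2 < p.1} := fun p hp => by
    simp only [K, mem_ofPred_eq] at hp ⊢; linarith [hp.2.1]
  have hKconvex : Convex ℝ K := by
    rintro x ⟨hx1, hx2, hx3⟩ y ⟨hy1, hy2, hy3⟩ μ ν hμ hν hμν
    simp only [K, mem_ofPred_eq, Prod.fst_add, Prod.snd_add, Prod.smul_fst, Prod.smul_snd,
      smul_eq_mul]
    refine ⟨by positivity, ?_, ?_⟩ <;> nlinarith
  have hKcompact : IsCompact K := by
    refine ((isCompact_Icc (a := a) (b := b)).prod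
      (isCompact_Icc (a := 0) (b := b))).of_isClosed_subset ?_ ?_
    · exact (isClosed_le continuous_const continuous_snd).inter
        ((isClosed_le (continuous_snd.add continuous_const) continuous_fst).inter
          (isClosed_le continuous_fst continuous_const))
    · rintro p ⟨h1, h2, h3⟩
      exact ⟨⟨by linarith, h3⟩, h1, by linarith⟩
  obtain ⟨C, hC⟩ :=
    ((contDiffOn_p01 hF).mono hKU).exists_lipschitzOnWith one_ne_zero hKconvex hKcompact
  refine ⟨C, fun s t r hts hsb hr hrt => ?_⟩
  have hmem : ∀ x, t ≤ x → x ≤ s → (x, r) ∈ K := fun x h1 h2 => ⟨hr, by linarith, by linarith⟩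
  have := hC.dist_le_mul (s, r) (hmem s hts le_rfl) (t, r) (hmem t le_rfl hts)
  simpa [Real.dist_eq, Prod.dist_eq, abs_of_nonneg (sub_nonneg.2 hts), sub_nonneg.2 hts] using this

lemma exists_mul_rpow_le_of_unifDiagLimit
    (hF : DifferentiableOn ℝ (fun p : ℝ × ℝ => F p.1 p.2) {p : ℝ × ℝ | p.2 < p.1})
    (hpos : ∀ t r : ℝ, r < t → 0 < F t r) {ρ q : ℝ} (hρq : ρ < q)
    (h01 : UnifDiagLimit (fun h t => h * p01 F t (t - h) / F t (t - h)) ρ)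
    {K : Set ℝ} (hK : IsCompact K) :
    ∃ c > 0, ∃ h₂ > 0, ∀ h, 0 < h → h ≤ h₂ → ∀ t ∈ K, c * h ^ q ≤ F t (t - h) := by
  obtain ⟨h₁, hh₁, hlim⟩ := h01 K hK (q - ρ) (sub_pos.2 hρq)
  set h₂ := h₁ / 2 with hh₂def
  have hh₂ : 0 < h₂ := by positivity
  have hcont : ContinuousOn (fun t => F t (t - h₂)) K :=
    hF.continuousOn.comp (continuous_id.prodMk (continuous_id.sub continuous_const)).continuousOn
      fun t _ => show t - h₂ < t by linarith
  obtain ⟨m, hm, hmK⟩ := hK.exists_forall_le' hcont fun t _ => hpos t _ (by linarith)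
  refine ⟨m / h₂ ^ q, by positivity, h₂, hh₂, fun h hh hhh₂ t ht => ?_⟩
  have hψ : ∀ x ∈ Icc h h₂, HasDerivAt (fun x => F t (t - x)) (-p01 F t (t - x)) x :=
    fun x hx => by
      simpa [Function.comp_def] using (hasDerivAt_p01 hF (show t - x < t by linarith [hx.1])).comp x
        ((hasDerivAt_id x).const_sub t)
  have hle : ∀ x ∈ Icc h h₂, x * -p01 F t (t - x) ≤ q * F t (t - x) := fun x hx => by
    have hFx := hpos t (t - x) (by linarith [hx.1])
    have hbound : -q < x * p01 F t (t - x) / F t (t - x) := by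
      linarith [(abs_lt.1 (hlim x (hh.trans_le hx.1) (by linarith [hx.2, hh₂def]) t ht)).1]
    rw [lt_div_iff₀ hFx] at hbound
    linarith
  have hanti : F t (t - h₂) / h₂ ^ q ≤ F t (t - h) / h ^ q :=
    antitoneOn_div_rpow hh hψ hle (left_mem_Icc.2 hhh₂) (right_mem_Icc.2 hhh₂) hhh₂
  have hhq : 0 < h ^ q := rpow_pos_of_pos hh q
  calc m / h₂ ^ q * h ^ q ≤ F t (t - h₂) / h₂ ^ q * h ^ q := by gcongr; exact hmK t ht
    _ ≤ F t (t - h) / h ^ q * h ^ q := by gcongr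
    _ = F t (t - h) := div_mul_cancel₀ _ hhq.ne'

lemma exists_rpow_le_mul_abs_p01
    (hF : DifferentiableOn ℝ (fun p : ℝ × ℝ => F p.1 p.2) {p : ℝ × ℝ | p.2 < p.1})
    (hpos : ∀ t r : ℝ, r < t → 0 < F t r) {ρ q : ℝ} (hρ : 0 < ρ) (hρq : ρ < q)
    (h01 : UnifDiagLimit (fun h t => h * p01 F t (t - h) / F t (t - h)) ρ)
    {K : Set ℝ} (hK : IsCompact K) :
    ∃ c > 0, ∃ h₂ > 0, ∀ h, 0 < h → h ≤ h₂ → ∀ t ∈ K, c * h ^ q ≤ h * |p01 F t (t - h)| := by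
  obtain ⟨c, hc, h₂, hh₂, hgrowth⟩ := exists_mul_rpow_le_of_unifDiagLimit hF hpos hρq h01 hK
  obtain ⟨h₁, hh₁, hlim⟩ := h01 K hK (ρ / 2) (by positivity)
  refine ⟨ρ / 2 * c, by positivity, min h₂ (h₁ / 2), by positivity, fun h hh hle t ht => ?_⟩
  have hFh := hpos t (t - h) (by linarith)
  have hbound : h * p01 F t (t - h) / F t (t - h) < -(ρ / 2) := by
    linarith [(abs_lt.1 (hlim h hh (by linarith [min_le_right h₂ (h₁ / 2)]) t ht)).2]
  rw [div_lt_iff₀ hFh] at hbound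
  calc ρ / 2 * c * h ^ q = ρ / 2 * (c * h ^ q) := by ring
    _ ≤ ρ / 2 * F t (t - h) := by gcongr; exact hgrowth h hh (hle.trans (min_le_left _ _)) t ht
    _ ≤ h * -p01 F t (t - h) := by linarith
    _ ≤ h * |p01 F t (t - h)| := by gcongr; exact neg_le_abs _

end SmoothVariation

/-- Lemma 5(a): for every `h₀ ∈ (0,1]`,
`lim_{δ↓0} sup_{h₀ ≤ t ≤ 1} ∫_{h₀/δ}^{t/δ} |g_δ(t,v)| dv = 0`. -/
theorem lemma5a (d : ℝ) (hd : d ∈ Set.Ioo (0:ℝ) 1)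
    (F : ℝ → ℝ → ℝ) (hF : SmoothVar F d)
    (f : ℝ → ℝ → ℝ) (hf : ∀ t r : ℝ, f t r = p01 F t r) :
    ∀ h₀ ∈ Set.Ioc (0:ℝ) 1, ∀ ε > (0:ℝ), ∃ δ₀ > (0:ℝ), ∀ δ : ℝ, 0 < δ → δ < δ₀ →
      ∀ t ∈ Set.Icc h₀ 1,
        (∫ v in (h₀ / δ)..(t / δ),
          |(f (t + δ) (t - δ * v) - f t (t - δ * v)) / f (t + δ) t|) < ε := by
  obtain ⟨hd0, hd1⟩ := hd
  obtain ⟨-, hC2, hpos, h01, -, -, -⟩ := hF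
  intro h₀ hh₀ ε hε
  obtain ⟨q, hdq, hq1⟩ := exists_between hd1
  obtain ⟨C, hC⟩ := exists_abs_p01_sub_le hC2 hh₀.1 2
  obtain ⟨c, hc, δ₁, hδ₁, hlow⟩ := exists_rpow_le_mul_abs_p01 (hC2.differentiableOn two_ne_zero)
    hpos hd0 hdq h01 (isCompact_Icc (a := h₀) (b := 2))
  have hlim : Tendsto (fun δ : ℝ => C / c * δ ^ (1 - q)) (𝓝 0) (𝓝 0) := by
    simpa [zero_rpow (by linarith : 1 - q ≠ 0)] using
      ((continuousAt_rpow_const 0 (1 - q) (Or.inr (by linarith))).tendsto.const_mul (C / c))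
  obtain ⟨δ₂, hδ₂, hsmall⟩ := Metric.eventually_nhds_iff.mp (hlim.eventually (gt_mem_nhds hε))
  refine ⟨min (min δ₁ 1) δ₂, by positivity, fun δ hδ hδδ₀ t ⟨ht₀, ht₁⟩ => ?_⟩
  simp only [lt_min_iff] at hδδ₀
  have hD : c * δ ^ q ≤ δ * |f (t + δ) t| := by
    simpa [hf] using hlow δ hδ hδδ₀.1.1.le (t + δ) ⟨by linarith, by linarith⟩
  have hD' : c * δ ^ q / δ ≤ |f (t + δ) t| := by rwa [div_le_iff₀' hδ]
  calc (∫ v in (h₀ / δ)..(t / δ), |(f (t + δ) (t - δ * v) - f t (t - δ * v)) / f (t + δ) t|)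
      ≤ (t - h₀) * C / |f (t + δ) t| :=
        intervalIntegral_abs_div_le (N := fun r => f (t + δ) r - f t r) hδ ht₀
          fun r hr hrt => by
            simpa only [hf, add_sub_cancel_left] using
              hC (t + δ) t r (by linarith) (by linarith) hr (by linarith)
    _ ≤ C / |f (t + δ) t| := by gcongr; exact mul_le_of_le_one_left C.2 (by linarith [hh₀.1])
    _ ≤ C / (c * δ ^ q / δ) := by gcongr
    _ = C / c * δ ^ (1 - q) := by rw [rpow_sub hδ, rpow_one]; field_simp
    _ < ε := hsmall (by simpa [abs_of_pos hδ] using hδδ₀.2)
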